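/- arXiv:2502.18634 — 4 statements merged into one kernel-verified Lean document; each statement's English description precedes it below -/
import Mathlib

section
/- For every τ > 0, every integer m ≥ 1, and all x, y ∈ ℝ^m, the family indexed by multi-indices n ∈ ℕ^m given by (1/(n₁!⋯n_m!)) (2/τ²)^{n₁+⋯+n_m} (e^{-‖x‖²/τ²} ∏_{i=1}^m x_i^{n_i}) (e^{-‖y‖²/τ²} ∏_{i=1}^m y_i^{n_i}) is summable, and its sum equals exp(−‖x−y‖²/τ²). Equivalently, exp(−‖x−y‖²/τ²) = Σ_{k=0}^∞ (1/k!)(2/τ²)^k Σ_{n ∈ ℕ^m, n₁+⋯+n_m=k} (k!/(n₁!⋯n_m!)) e^{-‖x‖²/τ²} x^n e^{-‖y‖²/τ²} y^n, where x^n denotes ∏_{i=1}^m x_i^{n_i}. -/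
open Real RealInnerProductSpace

lemma hasSum_exp_real (c : ℝ) :
    HasSum (fun k : ℕ => c ^ k / (Nat.factorial k : ℝ)) (Real.exp c) := by
  rw [Real.exp_eq_exp_ℝ]
  exact NormedSpace.expSeries_div_hasSum_exp c

lemma hasSum_pi_exp : ∀ (m : ℕ) (c : Fin m → ℝ),
    HasSum (fun n : Fin m → ℕ => ∏ i, c i ^ n i / (Nat.factorial (n i) : ℝ))
      (Real.exp (∑ i, c i)) := by
  intro m
  induction m with
  | zero =>
    intro c
    simpa using hasSum_single (α := ℝ) (f := fun _ : Fin 0 → ℕ => (1 : ℝ))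
      (default : Fin 0 → ℕ) (fun b hb => absurd (Subsingleton.elim b default) hb)
  | succ m ih =>
    intro c
    rw [← (Fin.consEquiv (fun _ : Fin (m+1) => ℕ)).hasSum_iff]
    have h0 : HasSum (fun k : ℕ => c 0 ^ k / (Nat.factorial k : ℝ)) (Real.exp (c 0)) :=
      hasSum_exp_real (c 0)
    have htail := ih (fun i => c i.succ)
    have hsummable : Summable (fun p : ℕ × (Fin m → ℕ) =>
        (c 0 ^ p.1 / (Nat.factorial p.1 : ℝ)) *
          ∏ i, c i.succ ^ p.2 i / (Nat.factorial (p.2 i) : ℝ)) := by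
      apply summable_mul_of_summable_norm (f := fun k : ℕ => c 0 ^ k / (Nat.factorial k : ℝ))
        (g := fun n : Fin m → ℕ => ∏ i, c i.succ ^ n i / (Nat.factorial (n i) : ℝ))
      · have := (hasSum_exp_real |c 0|).summable
        apply this.congr
        intro k
        simp [abs_div, abs_pow, Nat.abs_cast]
      · have := (ih (fun i => |c i.succ|)).summable
        apply this.congr
        intro n
        simp [Real.norm_eq_abs, Finset.abs_prod, abs_div, abs_pow, Nat.abs_cast]
    have hmul := h0.mul htail hsummable
    have : HasSum ((fun n : Fin (m+1) → ℕ =>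
        ∏ i, c i ^ n i / (Nat.factorial (n i) : ℝ)) ∘ (Fin.consEquiv (fun _ : Fin (m+1) => ℕ)))
        (Real.exp (c 0) * Real.exp (∑ i : Fin m, c i.succ)) := by
      apply hmul.congr_fun
      intro p
      simp only [Function.comp_apply, Fin.consEquiv_apply]
      rw [Fin.prod_univ_succ]
      simp [Fin.cons_succ]
    rwa [Fin.sum_univ_succ, Real.exp_add]

/-- Mercer eigen-expansion of the Gaussian kernel `exp (-‖x - y‖² / τ²)` on `ℝ^m`:
the family indexed by multi-indices `n : Fin m → ℕ` given by
`(1/∏ nᵢ!) (2/τ²)^(∑ nᵢ) (e^{-‖x‖²/τ²} ∏ xᵢ^{nᵢ}) (e^{-‖y‖²/τ²} ∏ yᵢ^{nᵢ})`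
is summable with sum `exp (-‖x - y‖² / τ²)`. -/
theorem stmt0 (τ : ℝ) (hτ : 0 < τ) (m : ℕ) (hm : 1 ≤ m)
    (x y : EuclideanSpace ℝ (Fin m)) :
    HasSum
      (fun n : Fin m → ℕ =>
        (1 / ∏ i, (Nat.factorial (n i) : ℝ)) * (2 / τ ^ 2) ^ (∑ i, n i) *
          (Real.exp (-‖x‖ ^ 2 / τ ^ 2) * ∏ i, x i ^ n i) *
          (Real.exp (-‖y‖ ^ 2 / τ ^ 2) * ∏ i, y i ^ n i))
      (Real.exp (-‖x - y‖ ^ 2 / τ ^ 2)) := by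
  have key := (hasSum_pi_exp m (fun i => 2 * x i * y i / τ ^ 2)).mul_left
    (Real.exp (-‖x‖ ^ 2 / τ ^ 2) * Real.exp (-‖y‖ ^ 2 / τ ^ 2))
  have heq : ∀ n : Fin m → ℕ,
      (1 / ∏ i, (Nat.factorial (n i) : ℝ)) * (2 / τ ^ 2) ^ (∑ i, n i) *
        (Real.exp (-‖x‖ ^ 2 / τ ^ 2) * ∏ i, x i ^ n i) *
        (Real.exp (-‖y‖ ^ 2 / τ ^ 2) * ∏ i, y i ^ n i) =
      Real.exp (-‖x‖ ^ 2 / τ ^ 2) * Real.exp (-‖y‖ ^ 2 / τ ^ 2) *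
        ∏ i, (2 * x i * y i / τ ^ 2) ^ n i / (Nat.factorial (n i) : ℝ) := by
    intro n
    rw [Finset.prod_div_distrib, ← Finset.prod_pow_eq_pow_sum]
    rw [show (∏ i, (2 * x i * y i / τ ^ 2) ^ n i)
        = ∏ i, ((2 / τ ^ 2) ^ n i * (x i ^ n i * y i ^ n i)) by
      apply Finset.prod_congr rfl
      intro i _
      rw [← mul_pow, ← mul_pow]
      ring_nf]
    rw [Finset.prod_mul_distrib, Finset.prod_mul_distrib]
    field_simp
  have hval : Real.exp (-‖x‖ ^ 2 / τ ^ 2) * Real.exp (-‖y‖ ^ 2 / τ ^ 2) *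
      Real.exp (∑ i, 2 * x i * y i / τ ^ 2) = Real.exp (-‖x - y‖ ^ 2 / τ ^ 2) := by
    rw [← Real.exp_add, ← Real.exp_add]
    congr 1
    have hnorm : ‖x - y‖ ^ 2 = ‖x‖ ^ 2 - 2 * (inner ℝ x y : ℝ) + ‖y‖ ^ 2 :=
      norm_sub_sq_real x y
    have hinner : (inner ℝ x y : ℝ) = ∑ i, x i * y i := by
      simp [PiLp.inner_apply, RCLike.inner_apply, mul_comm]
    have hτ2 : τ ^ 2 ≠ 0 := pow_ne_zero 2 hτ.ne'
    rw [hnorm, hinner, ← Finset.sum_div,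
      show (∑ i, 2 * x i * y i) = 2 * ∑ i, x i * y i by rw [Finset.mul_sum]; exact Finset.sum_congr rfl fun i _ => by ring]
    field_simp
    ring
  rw [← hval]
  exact key.congr_fun fun n => heq n
end

section
/- Let τ > 0, let m ≥ 1 and k ≥ 1 be integers, and let n ∈ ℕ^m be a multi-index with n₁+⋯+n_m = k. Then sup_{x ∈ ℝ^m} [ (1/k!) (2/τ²)^k (k!/(n₁!⋯n_m!)) exp(−2‖x‖²/τ²) ∏_{i=1}^m x_i^{2 n_i} ] = e^{−k} ∏_{i=1}^m n_i^{n_i}/n_i!, where by convention 0⁰ = 1; moreover the supremum is attained at the point x with coordinates x_i = (τ² n_i/2)^{1/2}. -/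
open Real Finset

lemma single_max (a : ℝ) (ha : 0 < a) (n : ℕ) (t : ℝ) (ht : 0 ≤ t) :
    t ^ n * Real.exp (-(a * t)) ≤ ((n : ℝ) / a) ^ n * Real.exp (-(n : ℝ)) := by
  rcases Nat.eq_zero_or_pos n with h0 | hp
  · subst h0
    simp only [pow_zero, one_mul, Nat.cast_zero, neg_zero, Real.exp_zero]
    exact Real.exp_le_one_iff.mpr (by nlinarith)
  · have hn : (0:ℝ) < n := by exact_mod_cast hp
    have h1 : a * t / n ≤ Real.exp (a * t / n - 1) := by
      have := Real.add_one_le_exp (a * t / n - 1); linarith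
    have h2 : (a * t / n) ^ n ≤ Real.exp (a * t / n - 1) ^ n :=
      pow_le_pow_left₀ (by positivity) h1 n
    rw [← Real.exp_nat_mul] at h2
    have h3 : (n : ℝ) * (a * t / n - 1) = a * t - n := by field_simp
    rw [h3] at h2
    have hte : t ^ n = ((n:ℝ)/a) ^ n * (a * t / n) ^ n := by
      rw [← mul_pow]; congr 1; field_simp
    calc t ^ n * Real.exp (-(a * t))
        = ((n:ℝ)/a) ^ n * ((a * t / n) ^ n * Real.exp (-(a * t))) := by rw [hte]; ring
      _ ≤ ((n:ℝ)/a) ^ n * (Real.exp (a * t - n) * Real.exp (-(a * t))) := by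
          apply mul_le_mul_of_nonneg_left _ (by positivity)
          exact mul_le_mul_of_nonneg_right h2 (Real.exp_pos _).le
      _ = ((n:ℝ)/a) ^ n * Real.exp (-(n:ℝ)) := by rw [← Real.exp_add]; ring_nf

lemma expr_eq (τ : ℝ) (hτ : 0 < τ) (m k : ℕ) (n : Fin m → ℕ) (hn : ∑ i, n i = k)
    (x : EuclideanSpace ℝ (Fin m)) :
    (1 / (Nat.factorial k : ℝ)) * (2 / τ ^ 2) ^ k *
        ((Nat.factorial k : ℝ) / ∏ i, (Nat.factorial (n i) : ℝ)) *
        Real.exp (-2 * ‖x‖ ^ 2 / τ ^ 2) * ∏ i, x i ^ (2 * n i)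
      = ∏ i, ((x i ^ 2) ^ (n i) * Real.exp (-(2 / τ ^ 2 * x i ^ 2)) *
          ((2 / τ ^ 2) ^ (n i) / (Nat.factorial (n i) : ℝ))) := by
  have hτ2 : (0:ℝ) < τ ^ 2 := by positivity
  have hnorm : ‖x‖ ^ 2 = ∑ i, x i ^ 2 := by
    rw [EuclideanSpace.norm_eq, Real.sq_sqrt (by positivity)]
    simp [Real.norm_eq_abs, sq_abs]
  have hexp : Real.exp (-2 * ‖x‖ ^ 2 / τ ^ 2) = ∏ i, Real.exp (-(2 / τ ^ 2 * x i ^ 2)) := by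
    rw [← Real.exp_sum]
    congr 1
    have hterm : ∀ i : Fin m, -(2 / τ ^ 2 * x i ^ 2) = (-2 / τ ^ 2) * x i ^ 2 :=
      fun i => by ring
    rw [hnorm, Finset.sum_congr rfl (fun i _ => hterm i), ← Finset.mul_sum]
    ring
  have hpow : (2 / τ ^ 2 : ℝ) ^ k = ∏ i, (2 / τ ^ 2 : ℝ) ^ (n i) := by
    rw [Finset.prod_pow_eq_pow_sum, hn]
  have hx : ∀ i, x i ^ (2 * n i) = (x i ^ 2) ^ (n i) := fun i => by rw [← pow_mul]
  have hfac : (Nat.factorial k : ℝ) ≠ 0 := Nat.cast_ne_zero.mpr (Nat.factorial_ne_zero k)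
  rw [hexp, hpow, Finset.prod_congr rfl (fun i _ => hx i), Finset.prod_mul_distrib,
    Finset.prod_mul_distrib, Finset.prod_div_distrib]
  field_simp

/-- The supremum over `x ∈ ℝ^m` of `λ_k φ_n(x)²` for the Gaussian kernel, where
`λ_k = (1/k!)(2/τ²)^k` and `φ_n(x) = (k!/(n₁!⋯n_m!))^{1/2} e^{-‖x‖²/τ²} ∏ xᵢ^{nᵢ}`,
equals `e^{-k} ∏ nᵢ^{nᵢ}/nᵢ!` and is attained at the point with coordinates
`xᵢ = (τ² nᵢ / 2)^{1/2}`. -/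
theorem stmt4 (τ : ℝ) (hτ : 0 < τ) (m k : ℕ) (hm : 1 ≤ m) (hk : 1 ≤ k)
    (n : Fin m → ℕ) (hn : ∑ i, n i = k) :
    ∃ x₀ : EuclideanSpace ℝ (Fin m),
      (∀ i, x₀ i = Real.sqrt (τ ^ 2 * (n i : ℝ) / 2)) ∧
      (1 / (Nat.factorial k : ℝ)) * (2 / τ ^ 2) ^ k *
          ((Nat.factorial k : ℝ) / ∏ i, (Nat.factorial (n i) : ℝ)) *
          Real.exp (-2 * ‖x₀‖ ^ 2 / τ ^ 2) * ∏ i, x₀ i ^ (2 * n i)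
        = Real.exp (-(k : ℝ)) * ∏ i, (n i : ℝ) ^ (n i) / (Nat.factorial (n i) : ℝ) ∧
      ∀ x : EuclideanSpace ℝ (Fin m),
        (1 / (Nat.factorial k : ℝ)) * (2 / τ ^ 2) ^ k *
            ((Nat.factorial k : ℝ) / ∏ i, (Nat.factorial (n i) : ℝ)) *
            Real.exp (-2 * ‖x‖ ^ 2 / τ ^ 2) * ∏ i, x i ^ (2 * n i)
          ≤ Real.exp (-(k : ℝ)) * ∏ i, (n i : ℝ) ^ (n i) / (Nat.factorial (n i) : ℝ) := by
  have hτ2 : (0:ℝ) < τ ^ 2 := by positivity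
  have ha : (0:ℝ) < 2 / τ ^ 2 := by positivity
  have hRHS : Real.exp (-(k : ℝ)) * ∏ i, (n i : ℝ) ^ (n i) / (Nat.factorial (n i) : ℝ)
      = ∏ i, ((n i : ℝ) ^ (n i) / (Nat.factorial (n i) : ℝ) * Real.exp (-(n i : ℝ))) := by
    rw [Finset.prod_mul_distrib, ← Real.exp_sum]
    have : ∑ i, -((n i : ℝ)) = -(k : ℝ) := by
      rw [Finset.sum_neg_distrib, ← hn]; push_cast; ring
    rw [this]; ring
  set x₀ : EuclideanSpace ℝ (Fin m) := WithLp.toLp 2 (fun i => Real.sqrt (τ ^ 2 * (n i : ℝ) / 2)) with hx₀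
  have hx0sq : ∀ i, x₀ i ^ 2 = τ ^ 2 * (n i : ℝ) / 2 := fun i =>
    Real.sq_sqrt (by positivity)
  refine ⟨x₀, fun i => rfl, ?_, ?_⟩
  · rw [expr_eq τ hτ m k n hn x₀, hRHS]
    refine Finset.prod_congr rfl fun i _ => ?_
    rw [hx0sq i]
    have h1 : (2 / τ ^ 2 * (τ ^ 2 * (n i : ℝ) / 2)) = (n i : ℝ) := by field_simp
    rw [h1]
    have h2 : (τ ^ 2 * (n i : ℝ) / 2) ^ (n i) * (2 / τ ^ 2) ^ (n i) = (n i : ℝ) ^ (n i) := by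
      rw [← mul_pow]; congr 1; field_simp
    calc (τ ^ 2 * (n i : ℝ) / 2) ^ n i * Real.exp (-(n i : ℝ)) *
          ((2 / τ ^ 2) ^ n i / (Nat.factorial (n i) : ℝ))
        = (τ ^ 2 * (n i : ℝ) / 2) ^ (n i) * (2 / τ ^ 2) ^ (n i) / (Nat.factorial (n i) : ℝ) *
          Real.exp (-(n i : ℝ)) := by ring
      _ = (n i : ℝ) ^ n i / (Nat.factorial (n i) : ℝ) * Real.exp (-(n i : ℝ)) := by rw [h2]
  · intro x
    rw [expr_eq τ hτ m k n hn x, hRHS]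
    refine Finset.prod_le_prod (fun i _ => by positivity) fun i _ => ?_
    have hfac : (0:ℝ) < (Nat.factorial (n i) : ℝ) := by
      exact_mod_cast (Nat.factorial_pos (n i))
    have key := single_max (2 / τ ^ 2) ha (n i) (x i ^ 2) (sq_nonneg _)
    have h2 : ((n i : ℝ) / (2 / τ ^ 2)) ^ (n i) * (2 / τ ^ 2) ^ (n i) = (n i : ℝ) ^ (n i) := by
      rw [← mul_pow]; congr 1; field_simp
    calc (x i ^ 2) ^ n i * Real.exp (-(2 / τ ^ 2 * x i ^ 2)) *
          ((2 / τ ^ 2) ^ n i / (Nat.factorial (n i) : ℝ))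
        ≤ ((n i : ℝ) / (2 / τ ^ 2)) ^ (n i) * Real.exp (-(n i : ℝ)) *
          ((2 / τ ^ 2) ^ n i / (Nat.factorial (n i) : ℝ)) := by
          apply mul_le_mul_of_nonneg_right key (by positivity)
      _ = ((n i : ℝ) / (2 / τ ^ 2)) ^ (n i) * (2 / τ ^ 2) ^ (n i) / (Nat.factorial (n i) : ℝ) *
          Real.exp (-(n i : ℝ)) := by ring
      _ = (n i : ℝ) ^ n i / (Nat.factorial (n i) : ℝ) * Real.exp (-(n i : ℝ)) := by rw [h2]
end

section
/- Let τ > 0 and let m ≥ 1 be an integer. For every integer k ≥ 1, Σ_{n ∈ ℕ^m, n₁+⋯+n_m = k} sup_{x ∈ ℝ^m} [ (1/k!) (2/τ²)^k (k!/(n₁!⋯n_m!)) exp(−2‖x‖²/τ²) ∏_{i=1}^m x_i^{2 n_i} ] ≤ π^{m/2} · k^{m/2 − 1}. -/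
open Real

namespace Stmt5Aux
open Finset

noncomputable def hfun (n : ℕ) : ℝ := if n = 0 then 1 else 1 / Real.sqrt (2 * π * n)

lemma hfun_zero : hfun 0 = 1 := if_pos rfl

lemma hfun_nonneg (n : ℕ) : 0 ≤ hfun n := by
  unfold hfun; split
  · norm_num
  · positivity

lemma hfun_eq (n : ℕ) (hn : n ≠ 0) :
    hfun n = 1 / (Real.sqrt (2 * π) * Real.sqrt n) := by
  unfold hfun
  rw [if_neg hn, Real.sqrt_mul (by positivity)]

lemma sqrt_two_pi_ge : (5/2 : ℝ) ≤ Real.sqrt (2 * π) := by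
  rw [Real.le_sqrt (by norm_num) (by positivity)]
  nlinarith [Real.pi_gt_d6]

lemma sqrt_pi_ge : (177/100 : ℝ) ≤ Real.sqrt π := by
  rw [Real.le_sqrt (by norm_num) Real.pi_nonneg]
  nlinarith [Real.pi_gt_d6]

lemma one_le_sqrt_pi : (1:ℝ) ≤ Real.sqrt π := le_trans (by norm_num) sqrt_pi_ge

lemma sum_inv_sqrt (n : ℕ) :
    ∑ i ∈ Finset.range n, 1 / Real.sqrt ((i:ℝ)+1) ≤ 2 * Real.sqrt n := by
  induction n with
  | zero => simp
  | succ n ih =>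
    rw [Finset.sum_range_succ]
    have hs : Real.sqrt n ≤ Real.sqrt ((n:ℝ)+1) := Real.sqrt_le_sqrt (by linarith)
    have ht : (0:ℝ) < Real.sqrt ((n:ℝ)+1) := Real.sqrt_pos.2 (by positivity)
    have h1 : Real.sqrt (n:ℝ) ^ 2 = n := Real.sq_sqrt n.cast_nonneg
    have h2 : Real.sqrt ((n:ℝ)+1) ^ 2 = (n:ℝ)+1 := Real.sq_sqrt (by positivity)
    have hmul : 2 * Real.sqrt (n:ℝ) * Real.sqrt ((n:ℝ)+1) ≤ 2*(n:ℝ)+1 := by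
      nlinarith [sq_nonneg (Real.sqrt (n:ℝ) - Real.sqrt ((n:ℝ)+1))]
    have key : 1 / Real.sqrt ((n:ℝ)+1) ≤ 2 * Real.sqrt ((n:ℝ)+1) - 2 * Real.sqrt n := by
      rw [div_le_iff₀ ht]
      nlinarith
    have : ((n:ℝ)+1) = ((n+1 : ℕ) : ℝ) := by push_cast; ring
    calc ∑ i ∈ Finset.range n, 1 / Real.sqrt ((i:ℝ)+1) + 1 / Real.sqrt ((n:ℝ)+1)
        ≤ 2 * Real.sqrt n + (2 * Real.sqrt ((n:ℝ)+1) - 2 * Real.sqrt n) := by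
          exact add_le_add ih key
      _ = 2 * Real.sqrt ((n+1 : ℕ) : ℝ) := by rw [← this]; ring

noncomputable def Sf (m k : ℕ) : ℝ :=
  ∑ n ∈ Finset.Nat.antidiagonalTuple m k, ∏ i, hfun (n i)

lemma Sf_nonneg (m k : ℕ) : 0 ≤ Sf m k :=
  Finset.sum_nonneg fun n _ => Finset.prod_nonneg fun i _ => hfun_nonneg _

lemma Sf_zero (m : ℕ) : Sf m 0 = 1 := by
  unfold Sf
  rw [Finset.Nat.antidiagonalTuple_zero_right, Finset.sum_singleton]
  simp [hfun_zero]

lemma Sf_one (k : ℕ) : Sf 1 k = hfun k := by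
  unfold Sf
  rw [Finset.Nat.antidiagonalTuple_one, Finset.sum_singleton]
  simp

lemma Sf_succ (m k : ℕ) :
    Sf (m+1) k = ∑ j ∈ Finset.range (k+1), hfun j * Sf m (k - j) := by
  unfold Sf
  simp only [Finset.mul_sum]
  rw [Finset.sum_sigma']
  refine (Finset.sum_bij (fun (x : Σ _ : ℕ, Fin m → ℕ) _ => Fin.cons x.1 x.2) ?_ ?_ ?_ ?_).symm
  · rintro ⟨j, t⟩ hx
    rw [Finset.mem_sigma, Finset.mem_range] at hx
    obtain ⟨hj, ht⟩ := hx
    rw [Finset.Nat.mem_antidiagonalTuple] at ht ⊢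
    rw [Fin.sum_cons, ht]
    omega
  · rintro ⟨j, t⟩ h1 ⟨j', t'⟩ h2 he
    have hj : j = j' := by
      have := congrFun he 0
      simpa using this
    subst hj
    have ht : t = t' := by
      funext i
      have := congrFun he i.succ
      simpa using this
    simp [ht]
  · intro n hn
    rw [Finset.Nat.mem_antidiagonalTuple] at hn
    refine ⟨⟨n 0, Fin.tail n⟩, ?_, ?_⟩
    · rw [Finset.mem_sigma, Finset.mem_range, Finset.Nat.mem_antidiagonalTuple]
      have hs : n 0 + ∑ i, Fin.tail n i = k := by
        rw [← hn, Fin.sum_univ_succ]; rfl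
      dsimp only
      constructor
      · omega
      · omega
    · exact Fin.cons_self_tail n
  · rintro ⟨j, t⟩ hx
    rw [Fin.prod_univ_succ]
    simp [Fin.cons_succ, Fin.cons_zero]


lemma hfun_le_q (n : ℕ) (hn : 1 ≤ n) : hfun n ≤ 1 / Real.sqrt (2 * π) := by
  rw [hfun_eq n (by omega)]
  have h1 : (1:ℝ) ≤ Real.sqrt n := by
    rw [show (1:ℝ) = Real.sqrt 1 by simp]
    exact Real.sqrt_le_sqrt (by exact_mod_cast hn)
  have hq : (0:ℝ) < Real.sqrt (2*π) := by positivity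
  rw [div_le_div_iff₀ (by positivity) hq]
  nlinarith

lemma Sf_succ_split (m K : ℕ) :
    Sf (m+1) (K+2) = Sf m (K+2)
      + (∑ i ∈ Finset.range (K+1), hfun (i+1) * Sf m (K+1-i)) + hfun (K+2) := by
  have e : K + 2 = K + 1 + 1 := by omega
  rw [e, Sf_succ, Finset.sum_range_succ, Finset.sum_range_succ']
  have h0 : hfun 0 * Sf m (K + 1 + 1 - 0) = Sf m (K+1+1) := by
    rw [hfun_zero, one_mul, Nat.sub_zero]
  have hk : hfun (K+1+1) * Sf m (K+1+1 - (K+1+1)) = hfun (K+1+1) := by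
    simp [Sf_zero]
  rw [h0, hk]
  have : ∀ i ∈ Finset.range (K+1), hfun (i+1) * Sf m (K+1+1-(i+1)) = hfun (i+1) * Sf m (K+1-i) := by
    intro i hi
    congr 2
    omega
  rw [Finset.sum_congr rfl this]
  ring

lemma Sf_k1 (m : ℕ) (hm : 1 ≤ m) : Sf m 1 ≤ Real.sqrt π ^ m := by
  induction m, hm using Nat.le_induction with
  | base =>
      rw [Sf_one, pow_one]
      refine le_trans (hfun_le_q 1 le_rfl) ?_
      rw [div_le_iff₀ (by positivity)]
      nlinarith [sqrt_two_pi_ge, sqrt_pi_ge]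
  | succ m hm ih =>
      have : Sf (m+1) 1 = Sf m 1 + hfun 1 := by
        rw [Sf_succ]
        simp [Finset.sum_range_succ, hfun_zero, Sf_zero]
      rw [this, pow_succ]
      have h1 : hfun 1 ≤ 1 / Real.sqrt (2*π) := hfun_le_q 1 le_rfl
      have h2 : (1:ℝ) ≤ Real.sqrt π ^ m := one_le_pow₀ one_le_sqrt_pi
      have h3 : (1:ℝ)/Real.sqrt (2*π) ≤ 2/5 := by
        rw [div_le_div_iff₀ (by positivity) (by norm_num)]
        nlinarith [sqrt_two_pi_ge]
      nlinarith [sqrt_pi_ge]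

lemma pow_div_mono (a b : ℕ) (ha : 1 ≤ a) (hab : a ≤ b) (m : ℕ) (hm : 2 ≤ m) :
    Real.sqrt a ^ m / a ≤ Real.sqrt b ^ m / b := by
  obtain ⟨M, rfl⟩ : ∃ M, m = M + 2 := ⟨m - 2, by omega⟩
  have hb : 1 ≤ b := le_trans ha hab
  have ea : Real.sqrt a ^ (M+2) / a = Real.sqrt a ^ M := by
    rw [pow_add, Real.sq_sqrt a.cast_nonneg, mul_div_assoc, div_self (by positivity), mul_one]
  have eb : Real.sqrt b ^ (M+2) / b = Real.sqrt b ^ M := by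
    rw [pow_add, Real.sq_sqrt b.cast_nonneg, mul_div_assoc, div_self (by positivity), mul_one]
  rw [ea, eb]
  exact pow_le_pow_left₀ (Real.sqrt_nonneg _) (Real.sqrt_le_sqrt (by exact_mod_cast hab)) M

lemma hfun_half (j k : ℕ) (hj : 1 ≤ j) (hk : 1 ≤ k) (hjk : k ≤ 2*j) :
    hfun j ≤ 1 / (Real.sqrt π * Real.sqrt k) := by
  rw [hfun_eq j (by omega), ← Real.sqrt_mul (by positivity), ← Real.sqrt_mul Real.pi_nonneg]
  apply one_div_le_one_div_of_le
  · positivity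
  · apply Real.sqrt_le_sqrt
    have hc : (k:ℝ) ≤ 2*(j:ℝ) := by exact_mod_cast hjk
    push_cast
    nlinarith [Real.pi_pos]


lemma hfun_succ_eq (i : ℕ) :
    hfun (i+1) = (1 / Real.sqrt (2*π)) * (1 / Real.sqrt ((i:ℝ)+1)) := by
  rw [hfun_eq _ (Nat.succ_ne_zero i)]
  push_cast
  rw [← one_div_mul_one_div]

lemma sum_hfun_le (K : ℕ) :
    ∑ i ∈ Finset.range (K+1), hfun (i+1)
      ≤ 2 * Real.sqrt ((K:ℝ)+1) / Real.sqrt (2*π) := by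
  have h1 : ∀ i ∈ Finset.range (K+1), hfun (i+1)
      = (1 / Real.sqrt (2*π)) * (1 / Real.sqrt ((i:ℝ)+1)) := fun i _ => hfun_succ_eq i
  rw [Finset.sum_congr rfl h1, ← Finset.mul_sum]
  have h2 := sum_inv_sqrt (K+1)
  push_cast at h2
  calc (1 / Real.sqrt (2*π)) * ∑ i ∈ Finset.range (K+1), 1 / Real.sqrt ((i:ℝ)+1)
      ≤ (1 / Real.sqrt (2*π)) * (2 * Real.sqrt ((K:ℝ)+1)) := by
        apply mul_le_mul_of_nonneg_left h2 (by positivity)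
    _ = 2 * Real.sqrt ((K:ℝ)+1) / Real.sqrt (2*π) := by ring

lemma sum_reflect_hfun (K : ℕ) :
    ∑ i ∈ Finset.range (K+1), hfun (K+1-i) = ∑ i ∈ Finset.range (K+1), hfun (i+1) := by
  have := Finset.sum_range_reflect (fun i => hfun (i+1)) (K+1)
  rw [← this]
  apply Finset.sum_congr rfl
  intro i hi
  rw [Finset.mem_range] at hi
  congr 1
  omega

lemma Sf_two (k : ℕ) (hk : 1 ≤ k) : Sf 2 k ≤ π := by
  rcases Nat.lt_or_ge k 2 with h | h
  · have hk1 : k = 1 := by omega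
    subst hk1
    have := Sf_k1 2 (by norm_num)
    have e : Real.sqrt π ^ 2 = π := Real.sq_sqrt Real.pi_nonneg
    linarith
  · obtain ⟨K, rfl⟩ : ∃ K, k = K+2 := ⟨k-2, by omega⟩
    rw [Sf_succ_split]
    set s := Real.sqrt ((K+2 : ℕ) : ℝ) with hs
    have hspos : 0 < s := by
      rw [hs]; apply Real.sqrt_pos.2; positivity
    set c := 1 / (Real.sqrt π * s) with hc
    have hcpos : 0 < c := by rw [hc]; positivity
    have hterm : ∀ i ∈ Finset.range (K+1),
        hfun (i+1) * Sf 1 (K+1-i) ≤ c * (hfun (i+1) + hfun (K+1-i)) := by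
      intro i hi
      rw [Finset.mem_range] at hi
      rw [Sf_one]
      by_cases hcase : K+2 ≤ 2*(i+1)
      · have h := hfun_half (i+1) (K+2) (by omega) (by omega) hcase
        calc hfun (i+1) * hfun (K+1-i) ≤ c * hfun (K+1-i) :=
              mul_le_mul_of_nonneg_right h (hfun_nonneg _)
          _ ≤ c * (hfun (i+1) + hfun (K+1-i)) := by
              apply mul_le_mul_of_nonneg_left _ hcpos.le
              linarith [hfun_nonneg (i+1)]
      · have h := hfun_half (K+1-i) (K+2) (by omega) (by omega) (by omega)
        calc hfun (i+1) * hfun (K+1-i) ≤ hfun (i+1) * c :=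
              mul_le_mul_of_nonneg_left h (hfun_nonneg _)
          _ = c * hfun (i+1) := by ring
          _ ≤ c * (hfun (i+1) + hfun (K+1-i)) := by
              apply mul_le_mul_of_nonneg_left _ hcpos.le
              linarith [hfun_nonneg (K+1-i)]
    have hmid2 : c * (2 * (2 * s / Real.sqrt (2*π)))
        = 4 / (Real.sqrt π * Real.sqrt (2*π)) := by
      have hq : (0:ℝ) < Real.sqrt (2*π) := by positivity
      have hp : (0:ℝ) < Real.sqrt π := by positivity
      rw [hc]
      field_simp
      ring
    have hmid : ∑ i ∈ Finset.range (K+1), hfun (i+1) * Sf 1 (K+1-i)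
        ≤ 4 / (Real.sqrt π * Real.sqrt (2*π)) := by
      calc ∑ i ∈ Finset.range (K+1), hfun (i+1) * Sf 1 (K+1-i)
          ≤ ∑ i ∈ Finset.range (K+1), c * (hfun (i+1) + hfun (K+1-i)) :=
            Finset.sum_le_sum hterm
        _ = c * (∑ i ∈ Finset.range (K+1), hfun (i+1)
              + ∑ i ∈ Finset.range (K+1), hfun (K+1-i)) := by
            rw [← Finset.mul_sum, Finset.sum_add_distrib]
        _ = c * (2 * ∑ i ∈ Finset.range (K+1), hfun (i+1)) := by
            rw [sum_reflect_hfun]; ring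
        _ ≤ c * (2 * (2 * Real.sqrt ((K:ℝ)+1) / Real.sqrt (2*π))) := by
            apply mul_le_mul_of_nonneg_left _ hcpos.le
            have hq : (0:ℝ) < Real.sqrt (2*π) := by positivity
            nlinarith [sum_hfun_le K]
        _ ≤ c * (2 * (2 * s / Real.sqrt (2*π))) := by
            have hK1 : Real.sqrt ((K:ℝ)+1) ≤ s := by
              rw [hs]; apply Real.sqrt_le_sqrt; push_cast; linarith
            gcongr
        _ = 4 / (Real.sqrt π * Real.sqrt (2*π)) := hmid2
    have hend : hfun (K+2) ≤ 1 / Real.sqrt (2*π) := hfun_le_q (K+2) (by omega)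
    have hS1 : Sf 1 (K+2) = hfun (K+2) := Sf_one (K+2)
    rw [hS1]
    have hq25 := sqrt_two_pi_ge
    have hp177 := sqrt_pi_ge
    have h1 : hfun (K+2) ≤ 2/5 := by
      refine le_trans hend ?_
      rw [div_le_div_iff₀ (by positivity) (by norm_num)]
      linarith
    have h2 : 4 / (Real.sqrt π * Real.sqrt (2*π)) ≤ 1 := by
      rw [div_le_one (by positivity)]
      nlinarith
    have := Real.pi_gt_d6
    linarith [hmid]

lemma Sf_step (m : ℕ) (hm : 2 ≤ m)
    (ih : ∀ k, 1 ≤ k → Sf m k ≤ Real.sqrt π ^ m * Real.sqrt k ^ m / k) :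
    ∀ k, 1 ≤ k → Sf (m+1) k ≤ Real.sqrt π ^ (m+1) * Real.sqrt k ^ (m+1) / k := by
  intro k hk
  rcases Nat.lt_or_ge k 2 with h | h
  · have hk1 : k = 1 := by omega
    subst hk1
    have := Sf_k1 (m+1) (by omega)
    simpa using this
  · obtain ⟨K, rfl⟩ : ∃ K, k = K+2 := ⟨k-2, by omega⟩
    rw [Sf_succ_split]
    set s := Real.sqrt ((K+2 : ℕ) : ℝ) with hs
    have hspos : 0 < s := by rw [hs]; apply Real.sqrt_pos.2; positivity
    set B := Real.sqrt π ^ m * s ^ m / ((K+2 : ℕ) : ℝ) with hB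
    have hBnn : 0 ≤ B := by rw [hB]; positivity
    have hgoal_eq : Real.sqrt π ^ (m+1) * s ^ (m+1) / ((K+2:ℕ):ℝ) = B * (Real.sqrt π * s) := by
      rw [hB]; field_simp; ring
    have h1 : Sf m (K+2) ≤ B := ih (K+2) (by omega)
    have hmono : ∀ j : ℕ, 1 ≤ j → j ≤ K+2 →
        Real.sqrt π ^ m * Real.sqrt (j:ℝ) ^ m / (j:ℝ) ≤ B := by
      intro j hj1 hj2
      rw [hB, mul_div_assoc, mul_div_assoc]
      apply mul_le_mul_of_nonneg_left _ (by positivity)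
      exact pow_div_mono j (K+2) hj1 hj2 m hm
    have hterm : ∀ i ∈ Finset.range (K+1),
        hfun (i+1) * Sf m (K+1-i)
          ≤ (1 / Real.sqrt (2*π)) * (1 / Real.sqrt ((i:ℝ)+1)) * B := by
      intro i hi
      rw [Finset.mem_range] at hi
      rw [hfun_succ_eq]
      apply mul_le_mul_of_nonneg_left _ (by positivity)
      exact le_trans (ih (K+1-i) (by omega)) (hmono (K+1-i) (by omega) (by omega))
    have hmid : ∑ i ∈ Finset.range (K+1), hfun (i+1) * Sf m (K+1-i)
        ≤ (1 / Real.sqrt (2*π)) * (2 * s) * B := by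
      calc ∑ i ∈ Finset.range (K+1), hfun (i+1) * Sf m (K+1-i)
          ≤ ∑ i ∈ Finset.range (K+1), (1 / Real.sqrt (2*π)) * (1 / Real.sqrt ((i:ℝ)+1)) * B :=
            Finset.sum_le_sum hterm
        _ = (1 / Real.sqrt (2*π)) * (∑ i ∈ Finset.range (K+1), 1 / Real.sqrt ((i:ℝ)+1)) * B := by
            rw [← Finset.sum_mul, ← Finset.mul_sum]
        _ ≤ (1 / Real.sqrt (2*π)) * (2 * s) * B := by
            apply mul_le_mul_of_nonneg_right _ hBnn
            apply mul_le_mul_of_nonneg_left _ (by positivity)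
            have h2 := sum_inv_sqrt (K+1)
            push_cast at h2
            have hK1 : Real.sqrt ((K:ℝ)+1) ≤ s := by
              rw [hs]; apply Real.sqrt_le_sqrt; push_cast; linarith
            linarith
    have hend : hfun (K+2) ≤ 1 / (Real.sqrt (2*π) * s) := by
      rw [hfun_eq _ (by omega)]
    -- numeric finish
    have hq25 := sqrt_two_pi_ge
    have hp177 := sqrt_pi_ge
    have hs14 : (1414/1000 : ℝ) ≤ s := by
      rw [hs]
      rw [Real.le_sqrt (by norm_num) (by positivity)]
      push_cast
      nlinarith [Nat.cast_nonneg (α := ℝ) K]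
    have hBpi : π ≤ B := by
      have e1 : Real.sqrt π ^ 2 ≤ Real.sqrt π ^ m := pow_le_pow_right₀ one_le_sqrt_pi hm
      have e2 : Real.sqrt ((1:ℕ):ℝ) ^ m / ((1:ℕ):ℝ) ≤ s ^ m / ((K+2:ℕ):ℝ) :=
        pow_div_mono 1 (K+2) le_rfl (by omega) m hm
      have e3 : Real.sqrt ((1:ℕ):ℝ) ^ m / ((1:ℕ):ℝ) = 1 := by
        norm_num
      have e4 : (1:ℝ) ≤ s ^ m / ((K+2:ℕ):ℝ) := by rw [← e3]; exact e2
      have e5 : Real.sqrt π ^ 2 = π := Real.sq_sqrt Real.pi_nonneg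
      calc π = Real.sqrt π ^ 2 * 1 := by rw [e5, mul_one]
        _ ≤ Real.sqrt π ^ m * (s ^ m / ((K+2:ℕ):ℝ)) := by
            apply mul_le_mul e1 e4 (by norm_num) (by positivity)
        _ = B := by rw [hB, mul_div_assoc]
    have hrw1 : (1 / Real.sqrt (2*π)) * (2 * s) * B ≤ (4/5 : ℝ) * s * B := by
      apply mul_le_mul_of_nonneg_right _ hBnn
      rw [div_mul_eq_mul_div, div_le_iff₀ (by positivity)]
      nlinarith [mul_le_mul_of_nonneg_left hq25 hspos.le]
    have hrw2 : 1 / (Real.sqrt (2*π) * s) ≤ (3/10 : ℝ) := by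
      rw [div_le_iff₀ (by positivity)]
      nlinarith
    have hpi := Real.pi_gt_d6
    rw [hgoal_eq]
    have hBs : π * (1414/1000 : ℝ) ≤ B * s :=
      mul_le_mul hBpi hs14 (by norm_num) hBnn
    nlinarith [le_trans hmid hrw1, le_trans hend hrw2, h1, hBs, hBnn, hspos, hp177]

lemma Sf_ge2 (m : ℕ) (hm : 2 ≤ m) :
    ∀ k, 1 ≤ k → Sf m k ≤ Real.sqrt π ^ m * Real.sqrt k ^ m / k := by
  induction m, hm using Nat.le_induction with
  | base =>
      intro k hk
      have h2 := Sf_two k hk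
      have e : Real.sqrt π ^ 2 * Real.sqrt (k:ℝ) ^ 2 / k = π := by
        rw [Real.sq_sqrt Real.pi_nonneg, Real.sq_sqrt (by positivity : (0:ℝ) ≤ (k:ℝ))]
        have : (k:ℝ) ≠ 0 := by positivity
        rw [mul_div_assoc, div_self this, mul_one]
      rw [e]
      exact h2
  | succ m hm2 ih => exact Sf_step m hm2 ih

lemma Sf_bound (m k : ℕ) (hm : 1 ≤ m) (hk : 1 ≤ k) :
    Sf m k ≤ Real.sqrt π ^ m * Real.sqrt k ^ m / k := by
  rcases Nat.lt_or_ge m 2 with h | h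
  · have hm1 : m = 1 := by omega
    subst hm1
    rw [Sf_one, hfun_eq _ (by omega), pow_one, pow_one]
    have hkpos : (0:ℝ) < k := by exact_mod_cast hk
    have hks : Real.sqrt (k:ℝ) * Real.sqrt (k:ℝ) = k := Real.mul_self_sqrt (by positivity)
    rw [div_le_div_iff₀ (by positivity) hkpos]
    have hq25 := sqrt_two_pi_ge
    have hp177 := sqrt_pi_ge
    have e : Real.sqrt π * Real.sqrt (k:ℝ) * (Real.sqrt (2*π) * Real.sqrt (k:ℝ))
        = (Real.sqrt π * Real.sqrt (2*π)) * (k:ℝ) := by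
      rw [show Real.sqrt π * Real.sqrt (k:ℝ) * (Real.sqrt (2*π) * Real.sqrt (k:ℝ))
        = (Real.sqrt π * Real.sqrt (2*π)) * (Real.sqrt (k:ℝ) * Real.sqrt (k:ℝ)) from by ring, hks]
    have hpq : (1:ℝ) ≤ Real.sqrt π * Real.sqrt (2*π) := by nlinarith
    nlinarith [mul_le_mul_of_nonneg_right hpq hkpos.le, e]
  · exact Sf_ge2 m h k hk


noncomputable def gfun (n : ℕ) : ℝ := (n:ℝ)^n * Real.exp (-(n:ℝ)) / (Nat.factorial n : ℝ)

lemma gfun_nonneg (n : ℕ) : 0 ≤ gfun n := by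
  unfold gfun
  positivity

lemma stirling_lb (n : ℕ) (hn : 1 ≤ n) :
    Real.sqrt π * (Real.sqrt (2*(n:ℝ)) * ((n:ℝ)/Real.exp 1)^n) ≤ (Nat.factorial n : ℝ) := by
  obtain ⟨j, rfl⟩ : ∃ j, n = j + 1 := ⟨n - 1, by omega⟩
  have hanti := Stirling.stirlingSeq'_antitone
  have hlim : Filter.Tendsto (Stirling.stirlingSeq ∘ Nat.succ) Filter.atTop (nhds (Real.sqrt π)) :=
    Stirling.tendsto_stirlingSeq_sqrt_pi.comp (Filter.tendsto_add_atTop_nat 1)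
  have hge : Real.sqrt π ≤ Stirling.stirlingSeq (j+1) := hanti.le_of_tendsto hlim j
  rw [Stirling.stirlingSeq] at hge
  have hpos : 0 < Real.sqrt (2*((j+1:ℕ):ℝ)) * (((j+1:ℕ):ℝ)/Real.exp 1)^(j+1) := by
    have : (0:ℝ) < ((j+1:ℕ):ℝ) := by exact_mod_cast Nat.succ_pos j
    positivity
  rw [le_div_iff₀ hpos] at hge
  exact hge

lemma gfun_le_hfun (n : ℕ) : gfun n ≤ hfun n := by
  rcases Nat.eq_zero_or_pos n with h0 | hpos
  · subst h0
    unfold gfun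
    rw [hfun_zero]
    norm_num
  · have hn : n ≠ 0 := by omega
    rw [hfun_eq n hn]
    unfold gfun
    have hfac : (0:ℝ) < (Nat.factorial n : ℝ) := by exact_mod_cast Nat.factorial_pos n
    have hq : (0:ℝ) < Real.sqrt (2*π) * Real.sqrt (n:ℝ) := by
      have : (0:ℝ) < (n:ℝ) := by exact_mod_cast hpos
      positivity
    rw [div_le_div_iff₀ hfac hq]
    have key := stirling_lb n hpos
    have e1 : ((n:ℝ)/Real.exp 1)^n = (n:ℝ)^n * Real.exp (-(n:ℝ)) := by
      rw [div_pow, Real.exp_neg]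
      rw [show Real.exp (n:ℝ) = Real.exp 1 ^ n from by
        rw [← Real.exp_nat_mul]; norm_num]
      ring
    have e2 : Real.sqrt (2*(n:ℝ)) = Real.sqrt 2 * Real.sqrt (n:ℝ) :=
      Real.sqrt_mul (by norm_num) _
    have e3 : Real.sqrt (2*π) = Real.sqrt 2 * Real.sqrt π :=
      Real.sqrt_mul (by norm_num) _
    rw [e1, e2] at key
    rw [e3]
    nlinarith [key]

lemma coord_bound (a : ℝ) (ha : 0 < a) (s : ℝ) (hs : 0 ≤ s) (n : ℕ) :
    Real.exp (-s/a) * s^n ≤ ((n:ℝ)*a)^n * Real.exp (-(n:ℝ)) := by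
  rcases Nat.eq_zero_or_pos n with h0 | hpos
  · subst h0
    simp only [pow_zero, mul_one, Nat.cast_zero, neg_zero, Real.exp_zero]
    have hd : 0 ≤ s/a := by positivity
    have h : -s/a ≤ 0 := by rw [neg_div]; linarith
    exact Real.exp_le_one_iff.2 h
  · have hna : (0:ℝ) < (n:ℝ)*a := by
      have : (0:ℝ) < (n:ℝ) := by exact_mod_cast hpos
      positivity
    set u := s / ((n:ℝ)*a) with hu
    have hu0 : 0 ≤ u := by positivity
    have h1 : u ≤ Real.exp (u - 1) := by
      have := Real.add_one_le_exp (u - 1)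
      linarith
    have h2 : u^n ≤ Real.exp (u-1)^n := pow_le_pow_left₀ hu0 h1 n
    have h3 : Real.exp (u-1)^n = Real.exp ((n:ℝ)*(u-1)) := (Real.exp_nat_mul _ n).symm
    have hs_eq : s = ((n:ℝ)*a) * u := by
      rw [hu]; field_simp
    rw [hs_eq, mul_pow]
    have hexp : Real.exp (-(((n:ℝ)*a)*u)/a) = Real.exp (-(n:ℝ)*u) := by
      congr 1
      field_simp
    rw [hexp]
    calc Real.exp (-(n:ℝ)*u) * (((n:ℝ)*a)^n * u^n)
        ≤ Real.exp (-(n:ℝ)*u) * (((n:ℝ)*a)^n * Real.exp ((n:ℝ)*(u-1))) := by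
          apply mul_le_mul_of_nonneg_left _ (Real.exp_nonneg _)
          apply mul_le_mul_of_nonneg_left _ (by positivity)
          rw [← h3]; exact h2
      _ = ((n:ℝ)*a)^n * Real.exp (-(n:ℝ)) := by
          rw [show Real.exp (-(n:ℝ)*u) * (((n:ℝ)*a)^n * Real.exp ((n:ℝ)*(u-1)))
            = ((n:ℝ)*a)^n * (Real.exp (-(n:ℝ)*u) * Real.exp ((n:ℝ)*(u-1))) from by ring,
            ← Real.exp_add]
          congr 2
          ring


lemma algebra_id (τ : ℝ) (hτ : τ ≠ 0) {m k : ℕ} (n : Fin m → ℕ) (hn : ∑ i, n i = k) :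
    (1 / (Nat.factorial k : ℝ)) * (2 / τ ^ 2) ^ k *
      ((Nat.factorial k : ℝ) / ∏ i, (Nat.factorial (n i) : ℝ)) *
      ∏ i, (((n i : ℝ) * (τ^2/2))^(n i) * Real.exp (-(n i : ℝ)))
      = ∏ i, gfun (n i) := by
  have h1 : ∏ i, (((n i:ℝ) * (τ^2/2))^(n i) * Real.exp (-(n i : ℝ)))
      = (∏ i, ((n i:ℝ)^(n i) * Real.exp (-(n i:ℝ)))) * (τ^2/2)^k := by
    rw [← hn, ← Finset.prod_pow_eq_pow_sum, ← Finset.prod_mul_distrib]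
    apply Finset.prod_congr rfl
    intro i _
    rw [mul_pow]
    ring
  rw [h1]
  unfold gfun
  have h2 : ∏ i, ((n i:ℝ)^(n i) * Real.exp (-(n i:ℝ)) / (Nat.factorial (n i) : ℝ))
      = (∏ i, ((n i:ℝ)^(n i) * Real.exp (-(n i:ℝ)))) / ∏ i, (Nat.factorial (n i) : ℝ) :=
    Finset.prod_div_distrib _ _
  rw [h2]
  have hfk : (Nat.factorial k : ℝ) ≠ 0 := by
    exact_mod_cast (Nat.factorial_pos k).ne'
  have hP : (∏ i, (Nat.factorial (n i):ℝ)) ≠ 0 := by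
    apply Finset.prod_ne_zero_iff.2
    intro i _
    exact_mod_cast (Nat.factorial_pos (n i)).ne'
  have hpow : (2/τ^2)^k * (τ^2/2)^k = 1 := by
    rw [← mul_pow, show (2/τ^2) * (τ^2/2) = 1 from by field_simp, one_pow]
  field_simp
  nlinarith [hpow, sq_nonneg ((∏ i, ((n i:ℝ)^(n i) * Real.exp (-(n i:ℝ))))), (by rw [hpow, one_mul] : (2/τ^2)^k * (τ^2/2)^k * (∏ i, ((n i:ℝ)^(n i) * Real.exp (-(n i:ℝ)))) = ∏ i, ((n i:ℝ)^(n i) * Real.exp (-(n i:ℝ))))]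

lemma sup_le (τ : ℝ) (hτ : 0 < τ) {m k : ℕ} (n : Fin m → ℕ) (hn : ∑ i, n i = k) :
    (⨆ x : EuclideanSpace ℝ (Fin m),
        (1 / (Nat.factorial k : ℝ)) * (2 / τ ^ 2) ^ k *
          ((Nat.factorial k : ℝ) / ∏ i, (Nat.factorial (n i) : ℝ)) *
          Real.exp (-2 * ‖x‖ ^ 2 / τ ^ 2) * ∏ i, x i ^ (2 * n i))
      ≤ ∏ i, gfun (n i) := by
  apply ciSup_le
  intro x
  have hnorm : ‖x‖^2 = ∑ i, (x i)^2 := by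
    rw [EuclideanSpace.norm_eq, Real.sq_sqrt (Finset.sum_nonneg fun i _ => sq_nonneg _)]
    simp [Real.norm_eq_abs, sq_abs]
  have hC : 0 ≤ (1 / (Nat.factorial k : ℝ)) * (2 / τ ^ 2) ^ k *
      ((Nat.factorial k : ℝ) / ∏ i, (Nat.factorial (n i) : ℝ)) := by
    have h1 : (0:ℝ) ≤ ∏ i, (Nat.factorial (n i) : ℝ) :=
      Finset.prod_nonneg fun i _ => by positivity
    positivity
  have hexp : Real.exp (-2 * ‖x‖ ^ 2 / τ ^ 2) = ∏ i, Real.exp (-((x i)^2)/(τ^2/2)) := by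
    rw [← Real.exp_sum]
    congr 1
    have e : ∀ i ∈ Finset.univ, -((x i)^2)/(τ^2/2) = (-2/τ^2) * (x i)^2 := by
      intro i _
      field_simp
    rw [Finset.sum_congr rfl e, ← Finset.mul_sum, ← hnorm]
    ring
  have hpowe : ∏ i, x i ^ (2 * n i) = ∏ i, ((x i)^2)^(n i) :=
    Finset.prod_congr rfl fun i _ => by rw [pow_mul]
  rw [hexp, hpowe, mul_assoc, ← Finset.prod_mul_distrib]
  calc (1 / (Nat.factorial k : ℝ)) * (2 / τ ^ 2) ^ k *
      ((Nat.factorial k : ℝ) / ∏ i, (Nat.factorial (n i) : ℝ)) *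
      ∏ i, (Real.exp (-((x i)^2)/(τ^2/2)) * ((x i)^2)^(n i))
      ≤ (1 / (Nat.factorial k : ℝ)) * (2 / τ ^ 2) ^ k *
        ((Nat.factorial k : ℝ) / ∏ i, (Nat.factorial (n i) : ℝ)) *
        ∏ i, (((n i:ℝ) * (τ^2/2))^(n i) * Real.exp (-(n i:ℝ))) := by
        apply mul_le_mul_of_nonneg_left _ hC
        apply Finset.prod_le_prod (fun i _ => by positivity)
        intro i _
        exact coord_bound (τ^2/2) (by positivity) ((x i)^2) (sq_nonneg _) (n i)
    _ = ∏ i, gfun (n i) := algebra_id τ hτ.ne' n hn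

end Stmt5Aux

open Stmt5Aux in
/-- Eigenfunction-growth bound for the Gaussian kernel: for every `k ≥ 1`, the sum over all
multi-indices `n ∈ ℕ^m` with `∑ nᵢ = k` of `sup_{x ∈ ℝ^m} λ_k φ_n(x)²` is at most
`π^{m/2} k^{m/2 - 1}`, where `λ_k = (1/k!)(2/τ²)^k` and
`φ_n(x) = (k!/(n₁!⋯n_m!))^{1/2} e^{-‖x‖²/τ²} ∏ xᵢ^{nᵢ}`. -/
theorem stmt5 (τ : ℝ) (hτ : 0 < τ) (m : ℕ) (hm : 1 ≤ m) (k : ℕ) (hk : 1 ≤ k) :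
    ∑ n ∈ Finset.Nat.antidiagonalTuple m k,
        ⨆ x : EuclideanSpace ℝ (Fin m),
          (1 / (Nat.factorial k : ℝ)) * (2 / τ ^ 2) ^ k *
            ((Nat.factorial k : ℝ) / ∏ i, (Nat.factorial (n i) : ℝ)) *
            Real.exp (-2 * ‖x‖ ^ 2 / τ ^ 2) * ∏ i, x i ^ (2 * n i)
      ≤ π ^ ((m : ℝ) / 2) * (k : ℝ) ^ ((m : ℝ) / 2 - 1) := by
  have hk0 : (0:ℝ) < (k:ℝ) := by exact_mod_cast hk
  have hterm : ∀ n ∈ Finset.Nat.antidiagonalTuple m k,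
      (⨆ x : EuclideanSpace ℝ (Fin m),
          (1 / (Nat.factorial k : ℝ)) * (2 / τ ^ 2) ^ k *
            ((Nat.factorial k : ℝ) / ∏ i, (Nat.factorial (n i) : ℝ)) *
            Real.exp (-2 * ‖x‖ ^ 2 / τ ^ 2) * ∏ i, x i ^ (2 * n i))
        ≤ ∏ i, hfun (n i) := by
    intro n hn
    refine le_trans (sup_le τ hτ n (Finset.Nat.mem_antidiagonalTuple.mp hn)) ?_
    exact Finset.prod_le_prod (fun i _ => gfun_nonneg _) (fun i _ => gfun_le_hfun _)
  have e1 : Real.sqrt π ^ m = π ^ ((m:ℝ)/2) := by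
    rw [Real.sqrt_eq_rpow, ← Real.rpow_natCast (π ^ ((1:ℝ)/2)) m, ← Real.rpow_mul Real.pi_nonneg]
    congr 1
    ring
  have e2 : Real.sqrt (k:ℝ) ^ m = (k:ℝ) ^ ((m:ℝ)/2) := by
    rw [Real.sqrt_eq_rpow, ← Real.rpow_natCast ((k:ℝ) ^ ((1:ℝ)/2)) m, ← Real.rpow_mul hk0.le]
    congr 1
    ring
  have e3 : (k:ℝ) ^ ((m:ℝ)/2 - 1) = (k:ℝ)^((m:ℝ)/2) / k := by
    rw [Real.rpow_sub hk0, Real.rpow_one]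
  calc ∑ n ∈ Finset.Nat.antidiagonalTuple m k,
        ⨆ x : EuclideanSpace ℝ (Fin m),
          (1 / (Nat.factorial k : ℝ)) * (2 / τ ^ 2) ^ k *
            ((Nat.factorial k : ℝ) / ∏ i, (Nat.factorial (n i) : ℝ)) *
            Real.exp (-2 * ‖x‖ ^ 2 / τ ^ 2) * ∏ i, x i ^ (2 * n i)
      ≤ ∑ n ∈ Finset.Nat.antidiagonalTuple m k, ∏ i, hfun (n i) :=
        Finset.sum_le_sum hterm
    _ = Sf m k := rfl
    _ ≤ Real.sqrt π ^ m * Real.sqrt (k:ℝ) ^ m / (k:ℝ) := Sf_bound m k hm hk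
    _ = π ^ ((m : ℝ) / 2) * (k : ℝ) ^ ((m : ℝ) / 2 - 1) := by
        rw [e1, e2, e3, mul_div_assoc]
end

section
/- For every integer k ≥ 2, Σ_{j=1}^{k−1} 1/√(j·(k−j)) ≤ π. -/
open Real

private lemma key_deriv {k x : ℝ} (hx0 : 0 < x) (hxk : x < k) :
    HasDerivAt (fun y : ℝ => arcsin (2 * y / k - 1)) (1 / Real.sqrt (x * (k - x))) x := by
  have hk0 : 0 < k := lt_trans hx0 hxk
  have hy1 : 2 * x / k - 1 ≠ -1 := by
    have : 0 < 2 * x / k := by positivity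
    intro h; nlinarith
  have hy2 : 2 * x / k - 1 ≠ 1 := by
    have : 2 * x / k < 2 := by rw [div_lt_iff₀ hk0]; nlinarith
    intro h; nlinarith
  have hlin : HasDerivAt (fun y : ℝ => 2 * y / k - 1) (2 / k) x := by
    simpa [mul_comm, mul_div_assoc] using
      (((hasDerivAt_id x).const_mul (2 : ℝ)).div_const k).sub_const 1
  have := (Real.hasDerivAt_arcsin hy1 hy2).comp x hlin
  have hsq : 1 - (2 * x / k - 1) ^ 2 = (2 / k) ^ 2 * (x * (k - x)) := by
    field_simp; ring
  have hpos : 0 < x * (k - x) := by nlinarith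
  have hsqrt : Real.sqrt (1 - (2 * x / k - 1) ^ 2)
      = 2 / k * Real.sqrt (x * (k - x)) := by
    rw [hsq, Real.sqrt_mul (by positivity), Real.sqrt_sq (by positivity)]
  have hne : Real.sqrt (x * (k - x)) ≠ 0 := by positivity
  refine this.congr_deriv ?_
  have h2k : (2 : ℝ) / k ≠ 0 := by positivity
  rw [hsqrt, one_div, one_div, mul_inv_rev, mul_assoc, inv_mul_cancel₀ h2k, mul_one]

private lemma key_step {k a : ℝ} (ha : 1 ≤ a) (hak : 2 * a ≤ k) :
    1 / Real.sqrt (a * (k - a)) ≤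
      arcsin (2 * a / k - 1) - arcsin (2 * (a - 1) / k - 1) := by
  have hk0 : 0 < k := by linarith
  have hab : a - 1 < a := by linarith
  obtain ⟨c, hc, hceq⟩ := exists_hasDerivAt_eq_slope (fun y : ℝ => arcsin (2 * y / k - 1))
    (fun y => 1 / Real.sqrt (y * (k - y))) hab
    (Real.continuous_arcsin.comp (by fun_prop)).continuousOn
    (fun x hx => key_deriv (by linarith [hx.1]) (by nlinarith [hx.2]))
  have hc0 : 0 < c := by linarith [hc.1]
  have hck : c < k := by nlinarith [hc.2]
  have hmono : Real.sqrt (c * (k - c)) ≤ Real.sqrt (a * (k - a)) := by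
    apply Real.sqrt_le_sqrt; nlinarith [hc.1, hc.2]
  have hcpos : 0 < Real.sqrt (c * (k - c)) := Real.sqrt_pos.2 (by nlinarith)
  have : 1 / Real.sqrt (a * (k - a)) ≤ 1 / Real.sqrt (c * (k - c)) :=
    one_div_le_one_div_of_le hcpos hmono
  calc 1 / Real.sqrt (a * (k - a)) ≤ 1 / Real.sqrt (c * (k - c)) := this
    _ = arcsin (2 * a / k - 1) - arcsin (2 * (a - 1) / k - 1) := by
        have := hceq
        rw [show a - (a - 1) = 1 by ring, div_one] at this
        linarith [this.symm.le, this.le]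

/-- For every integer `k ≥ 2`, `∑_{j=1}^{k-1} 1/√(j(k-j)) ≤ π`. -/
theorem stmt6 (k : ℕ) (hk : 2 ≤ k) :
    ∑ j ∈ Finset.Ico 1 k, 1 / Real.sqrt ((j : ℝ) * ((k : ℝ) - (j : ℝ))) ≤ π := by
  set m := k / 2 with hm
  have hm1 : 1 ≤ m := Nat.one_le_div_iff (by norm_num) |>.2 hk
  have hmk : m + 1 ≤ k := by omega
  have hsplit : ∑ j ∈ Finset.Ico 1 k, 1 / Real.sqrt ((j : ℝ) * ((k : ℝ) - (j : ℝ)))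
      = ∑ j ∈ Finset.Ico 1 (m + 1), 1 / Real.sqrt ((j : ℝ) * ((k : ℝ) - (j : ℝ)))
      + ∑ j ∈ Finset.Ico (m + 1) k, 1 / Real.sqrt ((j : ℝ) * ((k : ℝ) - (j : ℝ))) :=
    (Finset.sum_Ico_consecutive _ (by omega) hmk).symm
  -- reflect the upper half
  have hrefl : ∑ j ∈ Finset.Ico (m + 1) k, 1 / Real.sqrt ((j : ℝ) * ((k : ℝ) - (j : ℝ)))
      = ∑ j ∈ Finset.Ico 1 (k - m), 1 / Real.sqrt ((j : ℝ) * ((k : ℝ) - (j : ℝ))) := by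
    apply Finset.sum_nbij' (fun j => k - j) (fun j => k - j)
    · intro a ha; simp only [Finset.mem_Ico] at *; omega
    · intro a ha; simp only [Finset.mem_Ico] at *; omega
    · intro a ha; simp only [Finset.mem_Ico] at ha; omega
    · intro a ha; simp only [Finset.mem_Ico] at ha; omega
    · intro a ha
      simp only [Finset.mem_Ico] at ha
      have : ((k - a : ℕ) : ℝ) = (k : ℝ) - (a : ℝ) := by
        push_cast [Nat.cast_sub (by omega : a ≤ k)]; ring
      rw [this]; ring_nf
  have hhalf : ∑ j ∈ Finset.Ico 1 (k - m), 1 / Real.sqrt ((j : ℝ) * ((k : ℝ) - (j : ℝ)))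
      ≤ ∑ j ∈ Finset.Ico 1 (m + 1), 1 / Real.sqrt ((j : ℝ) * ((k : ℝ) - (j : ℝ))) := by
    apply Finset.sum_le_sum_of_subset_of_nonneg
    · apply Finset.Ico_subset_Ico le_rfl; omega
    · intro i _ _; positivity
  -- bound the lower half by the telescoping arcsin sum
  set G : ℕ → ℝ := fun j => arcsin (2 * (j : ℝ) / (k : ℝ) - 1) with hG
  have hterm : ∑ j ∈ Finset.Ico 1 (m + 1), 1 / Real.sqrt ((j : ℝ) * ((k : ℝ) - (j : ℝ)))
      ≤ ∑ j ∈ Finset.Ico 1 (m + 1), (G j - G (j - 1)) := by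
    apply Finset.sum_le_sum
    intro j hj
    simp only [Finset.mem_Ico] at hj
    have h1 : (1 : ℝ) ≤ (j : ℝ) := by exact_mod_cast hj.1
    have h2 : 2 * (j : ℝ) ≤ (k : ℝ) := by
      have : 2 * j ≤ k := by omega
      exact_mod_cast this
    have := key_step h1 h2
    have hcast : ((j - 1 : ℕ) : ℝ) = (j : ℝ) - 1 := by
      push_cast [Nat.cast_sub hj.1]; ring
    simpa [hG, hcast] using this
  have htel : ∑ j ∈ Finset.Ico 1 (m + 1), (G j - G (j - 1)) = G m - G 0 := by
    rw [Finset.sum_Ico_eq_sum_range]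
    simp only [Nat.add_sub_cancel, Nat.add_sub_cancel_left]
    have : ∀ i ∈ Finset.range m, G (1 + i) - G i = G (i + 1) - G i := by
      intro i _; rw [Nat.add_comm]
    rw [Finset.sum_congr rfl this]
    exact Finset.sum_range_sub G m
  have hG0 : G 0 = -(π / 2) := by
    simp [hG, Real.arcsin_neg_one]
  have hGm : G m ≤ 0 := by
    apply Real.arcsin_nonpos.2
    have hk0 : (0 : ℝ) < (k : ℝ) := by positivity
    have : 2 * (m : ℝ) ≤ (k : ℝ) := by exact_mod_cast (by omega : 2 * m ≤ k)
    rw [sub_nonpos, div_le_one hk0]; linarith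
  calc ∑ j ∈ Finset.Ico 1 k, 1 / Real.sqrt ((j : ℝ) * ((k : ℝ) - (j : ℝ)))
      ≤ 2 * ∑ j ∈ Finset.Ico 1 (m + 1), 1 / Real.sqrt ((j : ℝ) * ((k : ℝ) - (j : ℝ))) := by
        rw [hsplit, hrefl]; linarith
    _ ≤ 2 * (G m - G 0) := by linarith [htel ▸ hterm]
    _ ≤ π := by rw [hG0]; linarith
end
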